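/- Let n ≥ 2 and let π be a permutation of {1,…,n}. Then π ∈ ℒⁿ (i.e., π has penultimate entry n and last entry 1) if and only if π is exactly (n−1)-stack-sortable, meaning s^{n−1}(π) is the identity permutation 1 2 ⋯ n but s^m(π) is not the identity for any m < n−1. -/

import Mathlib

open scoped Pointwise

/-- One pass of the stack-sorting algorithm: `ssAux stack input`, where
`stack` holds the current stack contents, top first.  If the next input
entry exceeds the top of the stack, the top is popped to the output;
otherwise the entry is pushed; at the end the stack is popped entirely. -/
def ssAux : List ℕ → List ℕ → List ℕ
  | stack, [] => stack
  | [], x :: xs => ssAux [x] xs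
  | t :: ts, x :: xs =>
    if t < x then t :: ssAux ts (x :: xs) else ssAux (x :: t :: ts) xs
termination_by stack inp => stack.length + 2 * inp.length

/-- The stack-sorting map `s`: one pass of the stack-sorting algorithm. -/
def stackSort (l : List ℕ) : List ℕ := ssAux [] l


lemma ssAux_nil (st : List ℕ) : ssAux st [] = st := by cases st <;> rw [ssAux]

lemma ssAux_nil' (x : ℕ) (xs : List ℕ) : ssAux [] (x :: xs) = ssAux [x] xs := by rw [ssAux]

lemma ssAux_cons (t : ℕ) (ts : List ℕ) (x : ℕ) (xs : List ℕ) :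
    ssAux (t :: ts) (x :: xs) =
      if t < x then t :: ssAux ts (x :: xs) else ssAux (x :: t :: ts) xs := by rw [ssAux]

lemma ssAux_perm (st l : List ℕ) : (ssAux st l).Perm (st ++ l) := by
  have H : ∀ N st l, st.length + 2 * l.length ≤ N → (ssAux st l).Perm (st ++ l) := by
    intro N
    induction N with
    | zero =>
      intro st l h
      have hst : st = [] := by cases st <;> simp_all
      have hl : l = [] := by cases l <;> simp_all
      subst hst hl; simp [ssAux_nil]
    | succ N ih =>
      intro st l h
      match st, l with
      | st, [] => simp [ssAux_nil]
      | [], x :: xs =>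
        rw [ssAux_nil']
        have := ih [x] xs (by simp at h ⊢; omega)
        simpa using this
      | t :: ts, x :: xs =>
        rw [ssAux_cons]
        split
        · have := ih ts (x :: xs) (by simp at h ⊢; omega)
          exact (this.cons t)
        · have := ih (x :: t :: ts) xs (by simp at h ⊢; omega)
          refine this.trans ?_
          exact (List.Perm.swap t x (ts ++ xs)).trans ((List.perm_middle.symm).cons t)
  exact H _ st l le_rfl

lemma ssAux_pop (st : List ℕ) (x : ℕ) (xs : List ℕ) (h : ∀ t ∈ st, t < x) :
    ssAux st (x :: xs) = st ++ ssAux [x] xs := by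
  induction st with
  | nil => rw [ssAux_nil']; rfl
  | cons t ts ihs =>
    rw [ssAux_cons, if_pos (h t (by simp))]
    rw [ihs (fun a ha => h a (by simp [ha]))]
    rfl

lemma ssAux_split (n : ℕ) (st L R : List ℕ) (hst : ∀ a ∈ st, a < n) (hL : ∀ a ∈ L, a < n) :
    ssAux st (L ++ n :: R) = ssAux st L ++ ssAux [n] R := by
  have H : ∀ N st L, st.length + 2 * L.length ≤ N → (∀ a ∈ st, a < n) → (∀ a ∈ L, a < n) →
      ssAux st (L ++ n :: R) = ssAux st L ++ ssAux [n] R := by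
    intro N
    induction N with
    | zero =>
      intro st L h hst hL
      have hst' : st = [] := by cases st <;> simp_all
      have hL' : L = [] := by cases L <;> simp_all
      subst hst' hL'
      simp [ssAux_nil, ssAux_nil']
    | succ N ih =>
      intro st L h hst hL
      match L with
      | [] =>
        simp only [List.nil_append, ssAux_nil]
        exact ssAux_pop st n R hst
      | x :: xs =>
        match st with
        | [] =>
          rw [List.cons_append, ssAux_nil', ssAux_nil']
          exact ih [x] xs (by simp at h ⊢; omega) (by simpa using hL x (by simp))
            (fun a ha => hL a (by simp [ha]))
        | t :: ts =>
          rw [List.cons_append, ssAux_cons, ssAux_cons]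
          split
          · rw [← List.cons_append (a := x) (as := xs) (bs := n :: R),
              ih ts (x :: xs) (by simp at h ⊢; omega) (fun a ha => hst a (by simp [ha])) hL]
            rfl
          · exact ih (x :: t :: ts) xs (by simp at h ⊢; omega)
              (by intro a ha
                  rcases List.mem_cons.mp ha with rfl | ha
                  · exact hL a (by simp)
                  · exact hst a ha)
              (fun a ha => hL a (by simp [ha]))
  exact H _ st L le_rfl hst hL

lemma ssAux_top (n : ℕ) (st R : List ℕ) (hst : ∀ a ∈ st, a < n) (hR : ∀ a ∈ R, a < n) :
    ssAux (st ++ [n]) R = ssAux st R ++ [n] := by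
  have H : ∀ N st R, st.length + 2 * R.length ≤ N → (∀ a ∈ st, a < n) → (∀ a ∈ R, a < n) →
      ssAux (st ++ [n]) R = ssAux st R ++ [n] := by
    intro N
    induction N with
    | zero =>
      intro st R h hst hR
      have hst' : st = [] := by cases st <;> simp_all
      have hR' : R = [] := by cases R <;> simp_all
      subst hst' hR'; simp [ssAux_nil]
    | succ N ih =>
      intro st R h hst hR
      match R with
      | [] => simp [ssAux_nil]
      | x :: xs =>
        match st with
        | [] =>
          have hx : x < n := hR x (by simp)
          rw [List.nil_append, ssAux_cons, if_neg (by omega), ssAux_nil']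
          exact ih [x] xs (by simp at h ⊢; omega) (by simpa using hx)
            (fun a ha => hR a (by simp [ha]))
        | t :: ts =>
          rw [List.cons_append, ssAux_cons, ssAux_cons]
          split
          · rw [ih ts (x :: xs) (by simp at h ⊢; omega) (fun a ha => hst a (by simp [ha])) hR]
            rfl
          · rw [← List.cons_append (a := t) (as := ts) (bs := [n]), ← List.cons_append (a := x) (as := t :: ts) (bs := [n])]
            exact ih (x :: t :: ts) xs (by simp at h ⊢; omega)
              (by intro a ha
                  rcases List.mem_cons.mp ha with rfl | ha
                  · exact hR a (by simp)
                  · exact hst a ha)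
              (fun a ha => hR a (by simp [ha]))
  exact H _ st R le_rfl hst hR

lemma stackSort_perm (l : List ℕ) : (stackSort l).Perm l := by
  simpa [stackSort] using ssAux_perm [] l

lemma stackSort_nil : stackSort [] = [] := by simp [stackSort, ssAux_nil]

lemma stackSort_single (x : ℕ) : stackSort [x] = [x] := by
  rw [stackSort, ssAux_nil', ssAux_nil]

lemma stackSort_split (n : ℕ) (L R : List ℕ) (hL : ∀ a ∈ L, a < n) (hR : ∀ a ∈ R, a < n) :
    stackSort (L ++ n :: R) = stackSort L ++ stackSort R ++ [n] := by
  unfold stackSort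
  rw [ssAux_split n [] L R (by simp) hL,
    show ([n] : List ℕ) = [] ++ [n] by rfl, ssAux_top n [] R (by simp) hR]
  simp [List.append_assoc]

lemma stackSort_append_max (n : ℕ) (τ : List ℕ) (h : ∀ a ∈ τ, a < n) :
    stackSort (τ ++ [n]) = stackSort τ ++ [n] := by
  have := stackSort_split n τ [] h (by simp)
  simpa [stackSort_nil] using this

lemma iterate_append_max (n k : ℕ) (τ : List ℕ) (h : ∀ a ∈ τ, a < n) :
    stackSort^[k] (τ ++ [n]) = stackSort^[k] τ ++ [n] := by
  induction k generalizing τ with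
  | zero => rfl
  | succ k ih =>
    rw [Function.iterate_succ_apply, Function.iterate_succ_apply,
      stackSort_append_max n τ h]
    exact ih (stackSort τ) (fun a ha => h a ((stackSort_perm τ).subset ha))

lemma stackSort_last (l : List ℕ) (m : ℕ) (hm : m ∈ l) (hmax : ∀ a ∈ l, a ≤ m)
    (hnd : l.Nodup) : ∃ M, stackSort l = M ++ [m] := by
  obtain ⟨s, t, rfl⟩ := List.append_of_mem hm
  have hms : m ∉ s := by
    intro hc
    have := List.disjoint_of_nodup_append hnd hc
    simp at this
  have hmt : m ∉ t := by
    have := (List.Nodup.of_append_right hnd)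
    simp at this
    exact this.1
  have hs : ∀ a ∈ s, a < m := fun a ha =>
    lt_of_le_of_ne (hmax a (by simp [ha])) (fun h => hms (h ▸ ha))
  have ht : ∀ a ∈ t, a < m := fun a ha =>
    lt_of_le_of_ne (hmax a (by simp [ha])) (fun h => hmt (h ▸ ha))
  refine ⟨stackSort s ++ stackSort t, ?_⟩
  rw [stackSort_split m s t hs ht, List.append_assoc]

lemma exists_max : ∀ (l : List ℕ), l ≠ [] → ∃ m ∈ l, ∀ a ∈ l, a ≤ m := by
  intro l
  induction l with
  | nil => simp
  | cons x xs ih =>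
    intro _
    by_cases h : xs = []
    · subst h; exact ⟨x, by simp, by simp⟩
    · obtain ⟨m, hm, hmax⟩ := ih h
      rcases le_total x m with h' | h'
      · exact ⟨m, by simp [hm], by intro a ha; rcases List.mem_cons.mp ha with rfl | ha
                                   · exact h'
                                   · exact hmax a ha⟩
      · exact ⟨x, by simp, by intro a ha; rcases List.mem_cons.mp ha with rfl | ha
                              · exact le_rfl
                              · exact (hmax a ha).trans h'⟩

lemma range'_one_succ (n : ℕ) (hn : 1 ≤ n) :
    List.range' 1 n = List.range' 1 (n-1) ++ [n] := by
  obtain ⟨k, rfl⟩ : ∃ k, n = k + 1 := ⟨n - 1, by omega⟩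
  rw [List.range'_concat]
  simp; omega

lemma range'_two_succ (n : ℕ) (hn : 1 ≤ n) :
    List.range' 2 n = List.range' 2 (n-1) ++ [n+1] := by
  obtain ⟨k, rfl⟩ : ∃ k, n = k + 1 := ⟨n - 1, by omega⟩
  rw [List.range'_concat]
  simp; omega

lemma sorted_iterate : ∀ n, ∀ π : List ℕ, π.Perm (List.range' 1 n) →
    stackSort^[n-1] π = List.range' 1 n := by
  intro n
  induction n using Nat.strong_induction_on with
  | _ n ih =>
    intro π hπ
    match n with
    | 0 =>
      simp only [List.range'] at hπ ⊢
      simpa using hπ.eq_nil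
    | 1 =>
      simp only [show List.range' 1 1 = [1] from rfl] at hπ ⊢
      simpa using List.perm_singleton.mp hπ
    | (k+2) =>
      have hnd : π.Nodup := hπ.nodup_iff.mpr (List.nodup_range' 1)
      have hmem : (k+2) ∈ π := hπ.mem_iff.mpr (List.mem_range'_1.mpr ⟨by omega, by omega⟩)
      obtain ⟨A, R, rfl⟩ := List.append_of_mem hmem
      have hbound : ∀ a ∈ A ++ R, a < k + 2 := by
        intro a ha
        have hin : a ∈ A ++ (k+2) :: R := by
          rcases List.mem_append.mp ha with h | h
          · exact List.mem_append.mpr (Or.inl h)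
          · exact List.mem_append.mpr (Or.inr (by simp [h]))
        have hr := hπ.subset hin
        rw [List.mem_range'_1] at hr
        have hne : a ≠ k + 2 := by
          rintro rfl
          rcases List.mem_append.mp ha with h | h
          · exact absurd (by simp) (List.disjoint_of_nodup_append hnd h)
          · have := List.Nodup.of_append_right hnd
            simp at this
            exact this.1 h
        omega
      have hA : ∀ a ∈ A, a < k + 2 := fun a ha => hbound a (by simp [ha])
      have hR : ∀ a ∈ R, a < k + 2 := fun a ha => hbound a (by simp [ha])
      have hsplit := stackSort_split (k+2) A R hA hR
      set τ : List ℕ := stackSort A ++ stackSort R with hτ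
      have hτperm : τ.Perm (List.range' 1 (k+1)) := by
        have h1 : τ.Perm (A ++ R) := (stackSort_perm A).append (stackSort_perm R)
        have h2 : (A ++ (k+2) :: R).Perm ((k+2) :: (A ++ R)) := List.perm_middle
        have h3 : (List.range' 1 (k+2)).Perm ((k+2) :: List.range' 1 (k+1)) := by
          rw [range'_one_succ (k+2) (by omega)]
          simpa using (List.perm_middle (a := k+2) (l₁ := List.range' 1 (k+1)) (l₂ := []))
        have h4 : ((k+2) :: (A ++ R)).Perm ((k+2) :: List.range' 1 (k+1)) :=
          (h2.symm.trans hπ).trans h3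
        exact h1.trans h4.cons_inv
      have hτlt : ∀ a ∈ τ, a < k + 2 := fun a ha => by
        have : a ∈ A ++ R := ((stackSort_perm A).append (stackSort_perm R)).subset ha
        exact hbound a this
      have key : stackSort^[k+2-1] (A ++ (k+2) :: R) = stackSort^[k] τ ++ [k+2] := by
        rw [show k+2-1 = k+1 from rfl, Function.iterate_succ_apply, hsplit,
          show stackSort A ++ stackSort R ++ [k+2] = τ ++ [k+2] from rfl]
        exact iterate_append_max (k+2) k τ hτlt
      rw [key]
      have hihs := ih (k+1) (by omega) τ hτperm
      rw [show (k+1)-1 = k from rfl] at hihs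
      have hr : List.range' 1 (k+2) = List.range' 1 (k+1) ++ [k+2] := by
        simpa using range'_one_succ (k+2) (by omega)
      rw [hihs, ← hr]

lemma inL_not_sorted : ∀ n, 2 ≤ n → ∀ L : List ℕ, L.Perm (List.range' 2 (n-2)) →
    ∀ m < n-1, stackSort^[m] (L ++ [n, 1]) ≠ List.range' 1 n := by
  intro n
  induction n using Nat.strong_induction_on with
  | _ n ih =>
    intro hn L hL m hm
    obtain ⟨k, rfl⟩ : ∃ k, n = k + 2 := ⟨n - 2, by omega⟩
    match k with
    | 0 =>
      -- n = 2, L ~ range' 2 0 = []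
      have hL0 : L = [] := by simpa using hL.eq_nil
      subst hL0
      interval_cases m
      simp only [Function.iterate_zero, id]
      decide
    | (j+1) =>
      -- n = j + 3
      have hLlt : ∀ a ∈ L, 2 ≤ a ∧ a < j + 3 := by
        intro a ha
        have := hL.subset ha
        rw [List.mem_range'_1] at this
        omega
      have hndL : L.Nodup := hL.nodup_iff.mpr (List.nodup_range' 1)
      have hmem : (j+2) ∈ L := hL.mem_iff.mpr (List.mem_range'_1.mpr ⟨by omega, by omega⟩)
      obtain ⟨L1, L2, rfl⟩ := List.append_of_mem hmem
      have hL1 : ∀ a ∈ L1, a < j + 2 := by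
        intro a ha
        have h1 := (hLlt a (by simp [ha])).2
        have hne : a ≠ j + 2 := by
          rintro rfl
          exact absurd (by simp) (List.disjoint_of_nodup_append hndL ha)
        omega
      have hL2 : ∀ a ∈ L2, a < j + 2 := by
        intro a ha
        have h1 := (hLlt a (by simp [ha])).2
        have hne : a ≠ j + 2 := by
          rintro rfl
          have := List.Nodup.of_append_right hndL
          simp at this
          exact this.1 ha
        omega
      -- M := stackSort L1 ++ stackSort L2
      set M : List ℕ := stackSort L1 ++ stackSort L2 with hM
      have hMperm : M.Perm (List.range' 2 j) := by
        have h1 : M.Perm (L1 ++ L2) := (stackSort_perm L1).append (stackSort_perm L2)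
        have h2 : (L1 ++ (j+2) :: L2).Perm ((j+2) :: (L1 ++ L2)) := List.perm_middle
        have h3 : (List.range' 2 (j+1)).Perm ((j+2) :: List.range' 2 j) := by
          have := range'_two_succ (j+1) (by omega)
          simp only [Nat.add_sub_cancel] at this
          rw [this]
          simpa using (List.perm_middle (a := j+2) (l₁ := List.range' 2 j) (l₂ := []))
        have h4 := (h2.symm.trans hL).trans h3
        exact h1.trans h4.cons_inv
      -- stackSort of π
      have hallL : ∀ a ∈ L1 ++ (j+2) :: L2, a < j + 3 := fun a ha => (hLlt a ha).2
      have hsπ : stackSort ((L1 ++ (j+2) :: L2) ++ [j+3, 1]) = (M ++ [j+2, 1]) ++ [j+3] := by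
      
        have h1 : (L1 ++ (j+2) :: L2) ++ [j+3, 1] = (L1 ++ (j+2) :: L2) ++ (j+3) :: [1] := rfl
        rw [h1, stackSort_split (j+3) _ [1] hallL (by simp),
          stackSort_split (j+2) L1 L2 hL1 hL2, stackSort_single]
        simp [hM, List.append_assoc]
      have hτlt : ∀ a ∈ M ++ [j+2, 1], a < j + 3 := by
        intro a ha
        rcases List.mem_append.mp ha with h | h
        · have : a ∈ L1 ++ L2 := ((stackSort_perm L1).append (stackSort_perm L2)).subset h
          rcases List.mem_append.mp this with h' | h'
          · exact (hLlt a (by simp [h'])).2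
          · exact (hLlt a (by simp [h'])).2
        · simp at h; omega
      -- goal
      match m with
      | 0 =>
        simp only [Function.iterate_zero, id]
        intro heq
        have := congrArg List.getLast? heq
        rw [show (L1 ++ (j+2) :: L2) ++ [j+3, 1] = ((L1 ++ (j+2) :: L2) ++ [j+3]) ++ [1] by
            simp, List.getLast?_concat,
          range'_one_succ (j+3) (by omega), List.getLast?_concat] at this
        simp at this
      | (i+1) =>
        rw [Function.iterate_succ_apply, hsπ, iterate_append_max (j+3) i _ hτlt]
        intro heq
        rw [range'_one_succ (j+3) (by omega)] at heq
        obtain ⟨heq1, -⟩ := List.append_inj' heq rfl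
        have := ih (j+2) (by omega) (by omega) M hMperm i (by omega)
        exact this heq1

lemma notL_sorted : ∀ n, 2 ≤ n → ∀ π : List ℕ, π.Perm (List.range' 1 n) →
    (∀ L : List ℕ, L.Perm (List.range' 2 (n-2)) → π ≠ L ++ [n, 1]) →
    stackSort^[n-2] π = List.range' 1 n := by
  intro n
  induction n using Nat.strong_induction_on with
  | _ n ih =>
    intro hn π hπ hne
    obtain ⟨k, rfl⟩ : ∃ k, n = k + 2 := ⟨n - 2, by omega⟩
    match k with
    | 0 =>
      -- n = 2
      have h21 : π ≠ [2, 1] := by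
        have := hne [] (by simp)
        simpa using this
      have hlen : π.length = 2 := hπ.length_eq.trans (by simp)
      obtain ⟨a, b, rfl⟩ : ∃ a b, π = [a, b] := by
        match π, hlen with
        | [a, b], _ => exact ⟨a, b, rfl⟩
      have h1 : (1 : ℕ) ∈ [a, b] := hπ.mem_iff.mpr (by decide)
      have h2 : (2 : ℕ) ∈ [a, b] := hπ.mem_iff.mpr (by decide)
      show [a, b] = List.range' 1 2
      have hr : List.range' 1 2 = [1, 2] := rfl
      rw [hr]
      have h21' : ¬(a = 2 ∧ b = 1) := by
        rintro ⟨ha, hb⟩; exact h21 (by rw [ha, hb])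
      have h1' : 1 = a ∨ 1 = b := by simpa using h1
      have h2' : 2 = a ∨ 2 = b := by simpa using h2
      have hab : a = 1 ∧ b = 2 := by omega
      rw [hab.1, hab.2]
    | (j+1) =>
      -- n = j+3
      have hnd : π.Nodup := hπ.nodup_iff.mpr (List.nodup_range' 1)
      have hmem : (j+3) ∈ π := hπ.mem_iff.mpr (List.mem_range'_1.mpr ⟨by omega, by omega⟩)
      obtain ⟨A, R, rfl⟩ := List.append_of_mem hmem
      have hval : ∀ a ∈ A ++ (j+3) :: R, 1 ≤ a ∧ a < j + 4 := by
        intro a ha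
        have := hπ.subset ha
        rw [List.mem_range'_1] at this
        omega
      have hbound : ∀ a ∈ A ++ R, a < j + 3 := by
        intro a ha
        have hin : a ∈ A ++ (j+3) :: R := by
          rcases List.mem_append.mp ha with h | h
          · exact List.mem_append.mpr (Or.inl h)
          · exact List.mem_append.mpr (Or.inr (by simp [h]))
        have h1 := (hval a hin).2
        have hne' : a ≠ j + 3 := by
          rintro rfl
          rcases List.mem_append.mp ha with h | h
          · exact absurd (by simp) (List.disjoint_of_nodup_append hnd h)
          · have := List.Nodup.of_append_right hnd
            simp at this
            exact this.1 h
        omega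
      have hA : ∀ a ∈ A, a < j + 3 := fun a ha => hbound a (by simp [ha])
      have hR : ∀ a ∈ R, a < j + 3 := fun a ha => hbound a (by simp [ha])
      have hsplit := stackSort_split (j+3) A R hA hR
      set τ : List ℕ := stackSort A ++ stackSort R with hτdef
      clear_value τ
      have hτperm : τ.Perm (List.range' 1 (j+2)) := by
        have h1 : τ.Perm (A ++ R) := by
          rw [hτdef]; exact (stackSort_perm A).append (stackSort_perm R)
        have h2 : (A ++ (j+3) :: R).Perm ((j+3) :: (A ++ R)) := List.perm_middle
        have h3 : (List.range' 1 (j+3)).Perm ((j+3) :: List.range' 1 (j+2)) := by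
          have := range'_one_succ (j+3) (by omega)
          replace this : List.range' 1 (j+3) = List.range' 1 (j+2) ++ [j+3] := this
          rw [this]
          simpa using (List.perm_middle (a := j+3) (l₁ := List.range' 1 (j+2)) (l₂ := []))
        exact h1.trans (((h2.symm.trans hπ).trans h3).cons_inv)
      have hτlt : ∀ a ∈ τ, a < j + 3 := by
        intro a ha
        rw [hτdef] at ha
        exact hbound a (((stackSort_perm A).append (stackSort_perm R)).subset ha)
      by_cases hbad : ∃ M : List ℕ, τ = M ++ [j+2, 1]
      · exfalso
        obtain ⟨M, hMτ⟩ := hbad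
        have hR1 : R = [1] := by
          rcases R with _ | ⟨r, R'⟩
          · -- R = []
            exfalso
            have hτA : τ = stackSort A := by rw [hτdef, stackSort_nil, List.append_nil]
            have hAne : A ≠ [] := by
              rintro rfl
              rw [hτA, stackSort_nil] at hMτ
              simp at hMτ
            obtain ⟨mx, hmx, hmax⟩ := exists_max A hAne
            have hndA : A.Nodup := List.Nodup.of_append_left hnd
            obtain ⟨M', hM'⟩ := stackSort_last A mx hmx hmax hndA
            have heq : M' ++ [mx] = (M ++ [j+2]) ++ [1] := by
              rw [← hM', ← hτA, hMτ]; simp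
            have hmx1 : mx = 1 := by simpa using (List.append_inj' heq rfl).2
            subst hmx1
            have hlen2 : 2 ≤ A.length := by
              have hsl : (stackSort A).length = A.length := (stackSort_perm A).length_eq
              rw [hM'] at hsl
              have := congrArg List.length heq
              simp at hsl this
              omega
            rcases A with _ | ⟨a, A1⟩
            · simp at hlen2
            rcases A1 with _ | ⟨b, A2⟩
            · simp at hlen2
            have ha1 : a = 1 := le_antisymm (hmax a (by simp)) (hval a (by simp)).1
            have hb1 : b = 1 := le_antisymm (hmax b (by simp)) (hval b (by simp)).1
            rw [ha1, hb1] at hndA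
            simp at hndA
          · -- R = r :: R'
            obtain ⟨mx, hmx, hmax⟩ := exists_max (r :: R') (by simp)
            have hndR : (r :: R').Nodup := (List.Nodup.of_append_right hnd).of_cons
            obtain ⟨M', hM'⟩ := stackSort_last (r :: R') mx hmx hmax hndR
            have heq : (stackSort A ++ M') ++ [mx] = (M ++ [j+2]) ++ [1] := by
              have h0 : stackSort A ++ stackSort (r :: R') = M ++ [j+2, 1] := by
                rw [← hτdef, hMτ]
              rw [hM'] at h0
              rw [List.append_assoc, h0]
              simp
            have hmx1 : mx = 1 := by simpa using (List.append_inj' heq rfl).2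
            subst hmx1
            have hall1 : ∀ a ∈ r :: R', a = 1 := fun a ha =>
              le_antisymm (hmax a ha)
                (hval a (List.mem_append.mpr (Or.inr (List.mem_cons_of_mem _ ha)))).1
            have hr1 : r = 1 := hall1 r (by simp)
            have hR' : R' = [] := by
              rcases R' with _ | ⟨b, R''⟩
              · rfl
              · exfalso
                have hb1 : b = 1 := hall1 b (by simp)
                rw [hr1, hb1] at hndR
                simp at hndR
            rw [hr1, hR']
        subst hR1
        have hAperm : A.Perm (List.range' 2 (j+1)) := by
          have h2 : (A ++ (j+3) :: [1]).Perm ((j+3) :: (A ++ [1])) := List.perm_middle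
          have h3 : (List.range' 1 (j+3)).Perm ((j+3) :: List.range' 1 (j+2)) := by
            have := range'_one_succ (j+3) (by omega)
            replace this : List.range' 1 (j+3) = List.range' 1 (j+2) ++ [j+3] := this
            rw [this]
            simpa using (List.perm_middle (a := j+3) (l₁ := List.range' 1 (j+2)) (l₂ := []))
          have h4 : (A ++ [1]).Perm (List.range' 1 (j+2)) :=
            ((h2.symm.trans hπ).trans h3).cons_inv
          have h5 : (A ++ [1]).Perm (1 :: A) := by
            simpa using (List.perm_middle (a := 1) (l₁ := A) (l₂ := ([] : List ℕ)))
          have h6 : (List.range' 1 (j+2)) = 1 :: List.range' 2 (j+1) := by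
            rw [List.range'_succ]
          exact ((h5.symm.trans h4).trans (h6 ▸ List.Perm.refl _)).cons_inv
        exact hne A hAperm (by simp)
      · -- good case: τ ∉ ℒ
        push_neg at hbad
        have hτne : ∀ L : List ℕ, L.Perm (List.range' 2 j) → τ ≠ L ++ [j+2, 1] := by
          intro L _ hc
          exact hbad L hc
        have hih := ih (j+2) (by omega) (by omega) τ (by simpa using hτperm) hτne
        rw [show (j+2)-2 = j from rfl] at hih
        rw [show (j+3)-2 = j+1 from rfl, Function.iterate_succ_apply, hsplit,
          iterate_append_max (j+3) j τ hτlt, hih,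
          range'_one_succ (j+3) (by omega)]
        simp

/-- Let `n ≥ 2` and let `π` be a permutation of `{1, …, n}`.
Then `π ∈ ℒⁿ` (i.e. `π = L ++ [n, 1]` with `L` a permutation of
`{2, …, n-1}`) if and only if `π` is exactly `(n-1)`-stack-sortable:
`s^{n-1}(π)` is the identity `1 2 ⋯ n`, but `s^m(π)` is not the identity
for any `m < n-1`. -/
theorem Ln1_iff_exactly_stack_sortable (n : ℕ) (hn : 2 ≤ n) (π : List ℕ)
    (hπ : π.Perm (List.range' 1 n)) :
    (∃ L : List ℕ, L.Perm (List.range' 2 (n - 2)) ∧ π = L ++ [n, 1]) ↔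
    (stackSort^[n - 1] π = List.range' 1 n ∧
      ∀ m < n - 1, stackSort^[m] π ≠ List.range' 1 n) := by
  constructor
  · rintro ⟨L, hL, rfl⟩
    exact ⟨sorted_iterate n _ hπ, inL_not_sorted n hn L hL⟩
  · rintro ⟨-, hm⟩
    by_contra hno
    push_neg at hno
    have h := notL_sorted n hn π hπ (fun L hL => hno L hL)
    exact hm (n - 2) (by omega) h
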